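/- Let {x,y}, Z, W be pairwise disjoint node sets in an ADMG G (with x and y single nodes) such that (Z ∪ W) ∩ forb_G(x,y) = ∅ and y ⊥_{G̃} Z | W. Then every proper walk from Z to y in G that is open given W contains x, and its final part from an occurrence of x to y is a subwalk consisting solely of directed edges pointing toward y (a segment of the form x → … → y, containing no collider). -/

import Mathlib

/-- Edge type of a step on a walk in a mixed graph, relative to the direction of travel:
`fwd` is a directed edge pointing forward, `back` a directed edge pointing backward,
`bi` a bidirected edge. -/
inductive EdgeDir : Type
  | fwd
  | back
  | bi
  deriving DecidableEq

/-- The edge has an arrowhead at its second endpoint. -/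
def EdgeDir.arrowSnd : EdgeDir → Prop
  | .fwd => True
  | .back => False
  | .bi => True

/-- The edge has an arrowhead at its first endpoint. -/
def EdgeDir.arrowFst : EdgeDir → Prop
  | .fwd => False
  | .back => True
  | .bi => True

/-- The common node between consecutive walk edges `e₁, e₂` is a collider:
both edges have an arrowhead at it. -/
def IsColliderPair (e₁ e₂ : EdgeDir) : Prop := e₁.arrowSnd ∧ e₂.arrowFst

/-- A mixed graph: a set of directed edges and a set of bidirected edges on node type `V`. -/
structure MixedGraph (V : Type) where
  dir : V → V → Prop
  bidir : V → V → Prop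

namespace MixedGraph

variable {V : Type}

/-- `G` is an acyclic directed mixed graph: the bidirected edges are symmetric and
the directed edges contain no directed cycle. -/
def IsADMG (G : MixedGraph V) : Prop :=
  (∀ a b, G.bidir a b → G.bidir b a) ∧ ∀ v, ¬ Relation.TransGen G.dir v v

/-- There is an edge of type `e` between `a` and `b` (in this travel direction). -/
def IsEdge (G : MixedGraph V) : EdgeDir → V → V → Prop
  | .fwd, a, b => G.dir a b
  | .back, a, b => G.dir b a
  | .bi, a, b => G.bidir a b

/-- Walks in a mixed graph. -/
inductive Walk (G : MixedGraph V) : V → V → Type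
  | nil (v : V) : Walk G v v
  | cons {a b c : V} (e : EdgeDir) (hab : G.IsEdge e a b) (w : Walk G b c) : Walk G a c

namespace Walk

variable {G : MixedGraph V}

/-- The list of nodes of a walk, in order (with multiplicity). -/
def support : {a b : V} → G.Walk a b → List V
  | a, _, .nil _ => [a]
  | a, _, .cons _ _ w => a :: w.support

/-- The list of edge types along a walk. -/
def edges : {a b : V} → G.Walk a b → List EdgeDir
  | _, _, .nil _ => []
  | _, _, .cons e _ w => e :: w.edges

/-- All edges of the walk are directed and point toward the end of the walk. -/
def AllFwd : {a b : V} → G.Walk a b → Prop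
  | _, _, .nil _ => True
  | _, _, .cons e _ w => e = EdgeDir.fwd ∧ w.AllFwd

/-- Auxiliary predicate: the current node `b` was reached via an edge of type `e₁` and
the walk continues with `w`; every interior node from `b` onward that is a collider is in `W`
and every interior node from `b` onward that is a non-collider is not in `W`. -/
def openFrom (W : Set V) : EdgeDir → (b : V) → {c : V} → G.Walk b c → Prop
  | _, _, _, .nil _ => True
  | e₁, b, _, @Walk.cons _ _ _ m _ e₂ _ w =>
      (IsColliderPair e₁ e₂ → b ∈ W) ∧ (¬ IsColliderPair e₁ e₂ → b ∉ W) ∧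
      openFrom W e₂ m w

/-- A walk is open given `W` if every collider on it lies in `W` and no non-collider
on it lies in `W`. -/
def IsOpen {a b : V} (W : Set V) (w : G.Walk a b) : Prop :=
  match w with
  | .nil _ => True
  | @Walk.cons _ _ _ m _ e _ w' => openFrom W e m w'

/-- The walk ends with a segment of the form `x → ⋯ → end`: it has a final subwalk that
starts at `x` and consists solely of directed edges pointing toward the end of the walk. -/
def EndsWithDirFrom (x : V) : {a b : V} → G.Walk a b → Prop
  | a, _, .nil _ => a = x
  | a, _, .cons e _ w => (a = x ∧ e = EdgeDir.fwd ∧ w.AllFwd) ∨ w.EndsWithDirFrom x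

/-- The first edge of the walk has an arrowhead at the start node. -/
def firstArrowIn : {a b : V} → G.Walk a b → Prop
  | _, _, .nil _ => False
  | _, _, .cons e _ _ => e.arrowFst

/-- The last edge of the walk has an arrowhead at the end node. -/
def lastArrowIn : {a b : V} → G.Walk a b → Prop
  | _, _, .nil _ => False
  | _, _, .cons e _ (.nil _) => e.arrowSnd
  | _, _, .cons _ _ (.cons e h w) => lastArrowIn (.cons e h w)

/-- For each interior node of the walk, the pair of edges incident to it on the walk,
together with the node itself. -/
def colliderTriples {a b : V} (w : G.Walk a b) : List (EdgeDir × EdgeDir × V) :=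
  w.edges.zip (w.edges.tail.zip w.support.tail)

end Walk

/-- `X` and `Z` are d-connected given `C`: some walk from a node of `X` to a node of `Z`
is open given `C`. -/
def dConn (G : MixedGraph V) (X Z C : Set V) : Prop :=
  ∃ x ∈ X, ∃ z ∈ Z, ∃ w : G.Walk x z, w.IsOpen C

/-- The descendants of `x` (including `x` itself). -/
def desc (G : MixedGraph V) (x : V) : Set V := {v | Relation.ReflTransGen G.dir x v}

/-- The descendants of a set of nodes. -/
def descSet (G : MixedGraph V) (S : Set V) : Set V :=
  {v | ∃ s ∈ S, Relation.ReflTransGen G.dir s v}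

/-- The ancestors of a set of nodes (including the set itself). -/
def anc (G : MixedGraph V) (S : Set V) : Set V :=
  {v | ∃ s ∈ S, Relation.ReflTransGen G.dir v s}

/-- The parents of a set of nodes. -/
def pa (G : MixedGraph V) (S : Set V) : Set V := {p | ∃ s ∈ S, G.dir p s}

/-- `causal_G(x,y)`: the nodes `v ≠ x` lying on a proper directed path from `x` to `y`. -/
def causal (G : MixedGraph V) (x y : V) : Set V :=
  {v | v ≠ x ∧ ∃ w : G.Walk x y, w.AllFwd ∧ w.support.Nodup ∧ v ∈ w.support}

/-- The forbidden nodes `forb_G(x,y) = de_G(causal_G(x,y)) ∪ {x}`. -/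
def forb (G : MixedGraph V) (x y : V) : Set V := G.descSet (G.causal x y) ∪ {x}

/-- `G̃`: the graph `G` with every directed edge from `x` to a node of `causal_G(x,y)` removed. -/
def tilde (G : MixedGraph V) (x y : V) : MixedGraph V where
  dir a b := G.dir a b ∧ ¬(a = x ∧ b ∈ G.causal x y)
  bidir := G.bidir

/-- `(Z, W)` is a valid conditional instrumental set relative to `(x, y)` in `G`
(the graphical criterion of Henckel et al., taken as the definition): the sets
`{x,y}`, `Z`, `W` are pairwise disjoint, `(Z ∪ W) ∩ forb_G(x,y) = ∅`, `x ⊄⊥_G Z | W`,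
and `y ⊥_G̃ Z | W`. -/
def ValidCIS (G : MixedGraph V) (x y : V) (Z W : Set V) : Prop :=
  x ≠ y ∧ x ∉ Z ∧ x ∉ W ∧ y ∉ Z ∧ y ∉ W ∧ Disjoint Z W ∧
  (Z ∪ W) ∩ G.forb x y = ∅ ∧
  G.dConn {x} Z W ∧
  ¬ (G.tilde x y).dConn {y} Z W

/-- `W` is a nearest separator with respect to `(y, z, R)` in `H` (with ambient node `x`). -/
def NearestSep (H : MixedGraph V) (x y z : V) (R : Set V) (W : Set V) : Prop :=
  W ⊆ R ∩ H.anc {y, z} ∧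
  ¬ H.dConn {y} {z} W ∧
  ∀ w ∈ W, ∀ W' ⊆ (R ∩ H.anc {y, z}) \ {x, y, w},
    H.dConn {w} {z} W' → H.dConn {y} {z} W'

/-- `dis_{G,W}(u)`: the nodes connected to `u` via a path of bidirected edges with no
node in `W` (with `u ∈ dis_{G,W}(u)`). -/
def dis (G : MixedGraph V) (W : Set V) (u : V) : Set V :=
  {v | Relation.ReflTransGen (fun a b => G.bidir a b ∧ a ∉ W ∧ b ∉ W) u v}

/-- `dis⁺_{G,W}(u) = (dis_{G,W}(u) ∪ pa_G(dis_{G,W}(u))) ∖ W`. -/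
def disPlus (G : MixedGraph V) (W : Set V) (u : V) : Set V :=
  (G.dis W u ∪ G.pa (G.dis W u)) \ W

/-- `W^opt` of Henckel et al. -/
def Wopt (G : MixedGraph V) (x y : V) : Set V := G.disPlus {x} y \ {x, y}

/-- `Z^opt` of Henckel et al. -/
def Zopt (G : MixedGraph V) (x y : V) : Set V :=
  G.disPlus {y} x \ (G.Wopt x y ∪ {x, y})

/-- The latent projection of `G` over the latent nodes `L`: a directed edge exactly when
`G` has a directed path whose non-endpoint nodes lie in `L`, and a bidirected edge exactly
when `G` has a path whose non-endpoint nodes are non-colliders lying in `L` and whose first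
and last edges have an arrowhead at the respective endpoint. -/
def latentProj (G : MixedGraph V) (L : Set V) : MixedGraph V where
  dir a b := a ∉ L ∧ b ∉ L ∧ ∃ w : G.Walk a b,
    w.edges ≠ [] ∧ w.AllFwd ∧ w.support.Nodup ∧ ∀ v ∈ w.support.tail.dropLast, v ∈ L
  bidir a b := a ∉ L ∧ b ∉ L ∧ ∃ w : G.Walk a b,
    w.support.Nodup ∧ w.firstArrowIn ∧ w.lastArrowIn ∧
    (∀ v ∈ w.support.tail.dropLast, v ∈ L) ∧
    ∀ t ∈ w.colliderTriples, ¬ IsColliderPair t.1 t.2.1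

end MixedGraph

/-- The moralization of a DAG with edge relation `E` contains the (undirected) edge
`a − b` (for `a ≠ b`) exactly when `E a b`, or `E b a`, or `a` and `b` have a common child. -/
def MoralEdge {α : Type} (E : α → α → Prop) (a b : α) : Prop :=
  a ≠ b ∧ (E a b ∨ E b a ∨ ∃ c, E a c ∧ E b c)

/-! Follow the walk from `z` towards `y`. As long as its edges survive in `G̃`, the part traversed
so far cannot be continued to an open walk of `G̃` ending in `y`, since reversed it would
d-connect `y` and `Z` in `G̃`. The walk must therefore use a deleted edge `x → c` with
`c ∈ causal_G(x,y)`. It cannot be traversed backwards: then the walk up to `c` followed by the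
directed path `c → ⋯ → y` inside `causal_G(x,y)` would be open in `G̃`. So it is traversed as
`x → c`, and from there on every node is a descendant of `c`, hence forbidden and outside `W`,
hence a non-collider, which forces every later edge to point forward. -/

def EdgeDir.flip : EdgeDir → EdgeDir
  | .fwd => .back
  | .back => .fwd
  | .bi => .bi

theorem EdgeDir.isColliderPair_flip (e₁ e₂ : EdgeDir) :
    IsColliderPair e₂.flip e₁.flip ↔ IsColliderPair e₁ e₂ := by
  cases e₁ <;> cases e₂ <;>
    simp [IsColliderPair, EdgeDir.flip, EdgeDir.arrowFst, EdgeDir.arrowSnd, and_comm]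

namespace MixedGraph

variable {V : Type} {G : MixedGraph V}

theorem IsEdge.flip (hsym : ∀ a b, G.bidir a b → G.bidir b a) {e : EdgeDir} {a b : V}
    (h : G.IsEdge e a b) : G.IsEdge e.flip b a := by
  cases e
  · exact h
  · exact h
  · exact hsym _ _ h

namespace Walk

theorem support_eq_cons : ∀ {a b : V} (w : G.Walk a b), w.support = a :: w.support.tail
  | _, _, .nil _ => rfl
  | _, _, .cons _ _ _ => rfl

/-- `reverseAux p acc` is the reversal of `p` followed by `acc`. -/
def reverseAux (hsym : ∀ a b, G.bidir a b → G.bidir b a) :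
    {a b c : V} → G.Walk a b → G.Walk a c → G.Walk b c
  | _, _, _, .nil _, acc => acc
  | _, _, _, .cons _ h p, acc => reverseAux hsym p (.cons _ (h.flip hsym) acc)

def reverse (hsym : ∀ a b, G.bidir a b → G.bidir b a) {a b : V} (w : G.Walk a b) : G.Walk b a :=
  w.reverseAux hsym (.nil a)

theorem isOpen_reverseAux {W : Set V} (hsym : ∀ a b, G.bidir a b → G.bidir b a) :
    ∀ {a b c d : V} {e : EdgeDir} (p : G.Walk a b) (h : G.IsEdge e.flip a d) (acc : G.Walk d c),
      p.openFrom W e a → acc.openFrom W e.flip d →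
      (p.reverseAux hsym (.cons e.flip h acc)).IsOpen W
  | _, _, _, _, _, .nil _, _, _, _, hacc => hacc
  | _, _, _, _, e, .cons e₁ h₁ p, h, acc, hp, hacc => by
    obtain ⟨hcol, hncol, hp⟩ := hp
    exact isOpen_reverseAux hsym p (h₁.flip hsym) (.cons e.flip h acc) hp
      ⟨fun hc => hcol ((EdgeDir.isColliderPair_flip e e₁).mp hc),
        fun hc => hncol (mt (EdgeDir.isColliderPair_flip e e₁).mpr hc), hacc⟩

theorem IsOpen.reverse {W : Set V} (hsym : ∀ a b, G.bidir a b → G.bidir b a) :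
    ∀ {a b : V} {w : G.Walk a b}, w.IsOpen W → (w.reverse hsym).IsOpen W
  | _, _, .nil _, _ => trivial
  | _, _, .cons _ h p, hw => isOpen_reverseAux hsym p (h.flip hsym) (.nil _) hw trivial

theorem openFrom_of_allFwd {W : Set V} :
    ∀ {a b : V} {q : G.Walk a b}, q.AllFwd → (∀ u ∈ q.support, u ∉ W) →
      ∀ e, q.openFrom W e a
  | _, _, .nil _, _, _, _ => trivial
  | _, _, .cons _ _ _, hq, hW, _ => by
    obtain ⟨rfl, hq⟩ := hq
    exact ⟨fun hc => False.elim hc.2, fun _ => hW _ List.mem_cons_self,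
      openFrom_of_allFwd hq (fun u hu => hW u (List.mem_cons_of_mem _ hu)) _⟩

/-- Each node of `s` descends from `u`, hence lies outside `W` and has to be a non-collider. -/
theorem allFwd_of_openFrom_fwd {W : Set V} :
    ∀ {u b : V} {s : G.Walk u b}, Disjoint (G.desc u) W → s.openFrom W .fwd u → s.AllFwd
  | _, _, .nil _, _, _ => trivial
  | _, _, .cons e h s, hdW, hs => by
    obtain ⟨hcol, -, hs⟩ := hs
    have hu := Set.disjoint_left.mp hdW Relation.ReflTransGen.refl
    cases e with
    | fwd => exact ⟨rfl, allFwd_of_openFrom_fwd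
        (hdW.mono_left fun _ hv => Relation.ReflTransGen.head h hv) hs⟩
    | back => exact (hu (hcol ⟨trivial, trivial⟩)).elim
    | bi => exact (hu (hcol ⟨trivial, trivial⟩)).elim

theorem exists_allFwd_suffix :
    ∀ {a b v : V} {p : G.Walk a b}, p.AllFwd → v ∈ p.support →
      ∃ q : G.Walk v b, q.AllFwd ∧ q.support <:+ p.support
  | _, _, _, .nil _, _, hv => by
    obtain rfl := List.mem_singleton.mp hv
    exact ⟨.nil _, trivial, List.suffix_refl _⟩
  | _, _, _, .cons _ _ p, hp, hv => by
    rcases List.mem_cons.mp hv with rfl | hv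
    · exact ⟨_, hp, List.suffix_refl _⟩
    · obtain ⟨q, hq, hsuf⟩ := exists_allFwd_suffix hp.2 hv
      exact ⟨q, hq, hsuf.trans (List.suffix_cons _ _)⟩

end Walk

theorem dConn.symm {C X Z : Set V} (hsym : ∀ a b, G.bidir a b → G.bidir b a) :
    G.dConn X Z C → G.dConn Z X C
  | ⟨x, hx, z, hz, w, hw⟩ => ⟨z, hz, x, hx, w.reverse hsym, hw.reverse hsym⟩

variable {x y : V}

theorem desc_subset_forb {c : V} (hc : c ∈ G.causal x y) : G.desc c ⊆ G.forb x y :=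
  fun _ hv => Or.inl ⟨c, hc, hv⟩

theorem IsEdge.tilde_or_removed (x y : V) {e : EdgeDir} {a b : V} (h : G.IsEdge e a b) :
    (G.tilde x y).IsEdge e a b ∨ (e = .fwd ∧ a = x ∧ b ∈ G.causal x y) ∨
      (e = .back ∧ b = x ∧ a ∈ G.causal x y) := by
  cases e
  · by_cases hc : a = x ∧ b ∈ G.causal x y
    · exact Or.inr (Or.inl ⟨rfl, hc⟩)
    · exact Or.inl ⟨h, hc⟩
  · by_cases hc : b = x ∧ a ∈ G.causal x y
    · exact Or.inr (Or.inr ⟨rfl, hc⟩)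
    · exact Or.inl ⟨h, hc⟩
  · exact Or.inl h

theorem IsEdge.tilde_of_not_mem_forb {e : EdgeDir} {a b : V} (h : G.IsEdge e a b)
    (ha : a ∉ G.forb x y) : (G.tilde x y).IsEdge e a b := by
  rcases h.tilde_or_removed x y with h | ⟨_, rfl, _⟩ | ⟨_, _, hac⟩
  · exact h
  · exact absurd (Or.inr rfl) ha
  · exact absurd (desc_subset_forb hac Relation.ReflTransGen.refl) ha

theorem Walk.exists_tilde_of_allFwd :
    ∀ {a b : V} {p : G.Walk a b}, p.AllFwd → x ∉ p.support →
      ∃ q : (G.tilde x y).Walk a b, q.AllFwd ∧ q.support = p.support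
  | _, _, .nil _, _, _ => ⟨.nil _, trivial, rfl⟩
  | _, _, .cons _ h _, hp, hx => by
    obtain ⟨rfl, hp⟩ := hp
    obtain ⟨q, hq, hsupp⟩ :=
      exists_tilde_of_allFwd hp (fun hxp => hx (List.mem_cons_of_mem _ hxp))
    refine ⟨.cons .fwd ⟨h, fun hax => hx (hax.1 ▸ List.mem_cons_self)⟩ q, ⟨rfl, hq⟩, ?_⟩
    exact congrArg _ hsupp

theorem exists_tilde_allFwd_of_mem_causal {v : V} (hv : v ∈ G.causal x y) :
    ∃ q : (G.tilde x y).Walk v y, q.AllFwd ∧ ∀ u ∈ q.support, u ∈ G.causal x y := by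
  obtain ⟨hvx, p, hp, hnd, hvp⟩ := hv
  obtain ⟨q, hq, hsuf⟩ := Walk.exists_allFwd_suffix hp hvp
  have hqx : ∀ u ∈ q.support, u ≠ x := by
    rw [p.support_eq_cons] at hsuf hnd
    rcases List.suffix_cons_iff.mp hsuf with heq | htail
    · rw [q.support_eq_cons, List.cons.injEq] at heq
      exact absurd heq.1 hvx
    · exact fun u hu hux => (List.nodup_cons.mp hnd).1 (hux ▸ htail.subset hu)
  have hqc : ∀ u ∈ q.support, u ∈ G.causal x y := fun u hu =>
    ⟨hqx u hu, p, hp, hnd, hsuf.subset hu⟩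
  obtain ⟨q', hq', hsupp⟩ := Walk.exists_tilde_of_allFwd (y := y) hq (fun hx => hqx x hx rfl)
  exact ⟨q', hq', hsupp ▸ hqc⟩

/-- The last hypothesis is the invariant carried along the walk: the part already traversed,
which enters `v` along `e`, cannot be completed to an open walk of `G̃` ending in `y`. -/
theorem Walk.endsWithDirFrom_of_openFrom {W : Set V} (hW : Disjoint (G.forb x y) W) :
    ∀ {v : V} {e : EdgeDir} (s : G.Walk v y), s.openFrom W e v →
      (∀ q : (G.tilde x y).Walk v y, ¬ q.openFrom W e v) →
      x ∈ s.support ∧ s.EndsWithDirFrom x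
  | _, _, .nil _, _, hblock => (hblock (.nil _) trivial).elim
  | _, e, .cons e₁ h s, hs, hblock => by
    obtain ⟨hcol, hncol, hs⟩ := hs
    rcases h.tilde_or_removed x y with h' | ⟨rfl, rfl, hc⟩ | ⟨rfl, rfl, hc⟩
    · obtain ⟨hx, hends⟩ := endsWithDirFrom_of_openFrom hW s hs
        fun q hq => hblock (.cons e₁ h' q) ⟨hcol, hncol, hq⟩
      exact ⟨List.mem_cons_of_mem _ hx, Or.inr hends⟩
    · exact ⟨List.mem_cons_self, Or.inl ⟨rfl, rfl,
        allFwd_of_openFrom_fwd (hW.mono_left (desc_subset_forb hc)) hs⟩⟩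
    · obtain ⟨q, hq, hqc⟩ := exists_tilde_allFwd_of_mem_causal hc
      exact (hblock q (openFrom_of_allFwd hq (fun u hu =>
        Set.disjoint_left.mp hW (desc_subset_forb (hqc u hu) .refl)) e)).elim

end MixedGraph

theorem open_proper_walk_ends_directed_from_x_general {V : Type} (G : MixedGraph V) (hG : G.IsADMG)
    (x y : V) (Z W : Set V)
    (hforb : (Z ∪ W) ∩ G.forb x y = ∅)
    (hsep : ¬ (G.tilde x y).dConn {y} Z W) :
    ∀ z ∈ Z, ∀ w : G.Walk z y,
      (∀ v ∈ w.support.tail, v ∉ Z) →  -- the walk is proper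
      w.IsOpen W →
      x ∈ w.support ∧ w.EndsWithDirFrom x := by
  intro z hz w _ hopen
  have hblock (q : (G.tilde x y).Walk z y) : ¬ q.IsOpen W := fun hq =>
    hsep (MixedGraph.dConn.symm hG.1 ⟨z, hz, y, rfl, q, hq⟩)
  have hdisj : Disjoint (Z ∪ W) (G.forb x y) := Set.disjoint_iff_inter_eq_empty.mpr hforb
  cases w with
  | nil => exact (hblock (.nil _) trivial).elim
  | cons e h w =>
    have h' := h.tilde_of_not_mem_forb (Set.disjoint_left.mp hdisj (Or.inl hz))
    obtain ⟨hx, hends⟩ := MixedGraph.Walk.endsWithDirFrom_of_openFrom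
      (hdisj.mono_left Set.subset_union_right).symm w hopen (fun q => hblock (.cons e h' q))
    exact ⟨List.mem_cons_of_mem _ hx, Or.inr hends⟩

/-- Let `{x,y}`, `Z`, `W` be pairwise disjoint node sets in an ADMG `G`
(with `x` and `y` single nodes) such that `(Z ∪ W) ∩ forb_G(x,y) = ∅` and `y ⊥_G̃ Z | W`.
Then every proper walk from `Z` to `y` in `G` that is open given `W` contains `x`, and its
final part from an occurrence of `x` to `y` consists solely of directed edges pointing
toward `y` (a segment of the form `x → ⋯ → y`). -/
theorem open_proper_walk_ends_directed_from_x {V : Type} (G : MixedGraph V) (hG : G.IsADMG)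
    (x y : V) (Z W : Set V)
    (hxy : x ≠ y) (hxZ : x ∉ Z) (hxW : x ∉ W) (hyZ : y ∉ Z) (hyW : y ∉ W)
    (hZW : Disjoint Z W)
    (hforb : (Z ∪ W) ∩ G.forb x y = ∅)
    (hsep : ¬ (G.tilde x y).dConn {y} Z W) :
    ∀ z ∈ Z, ∀ w : G.Walk z y,
      (∀ v ∈ w.support.tail, v ∉ Z) →  -- the walk is proper
      w.IsOpen W →
      x ∈ w.support ∧ w.EndsWithDirFrom x :=
  open_proper_walk_ends_directed_from_x_general G hG x y Z W hforb hsep
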